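/- For a Schur product channel Φ(X) = C ∘ X where C is an n×n correlation matrix, the rank of Φ as a linear map equals the number of nonzero entries of C, and rank(Φ)·rank(C ∘ conj(C)) ≥ n². -/

import Mathlib

open scoped ComplexOrder

open Matrix Finset

/-! `Φ` is diagonal in the basis of matrix units, acting on `E i j` by the scalar `C i j`, so its
rank counts the nonzero entries of `C`. For the inequality, `A = C ∘ conj C` is positive
semidefinite (Schur product theorem) with `A i i = 1` and `A i j = |C i j|²`. Cauchy–Schwarz on
the nonzero eigenvalues of `A` gives `n² = (tr A)² ≤ rank A · ∑ λ² = rank A · ∑ |A i j|²`, and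
since `|C i j|² ≤ C i i C j j = 1`, each term `|A i j|²` is at most `1`, and `0` where `C i j = 0`. -/

theorem sq_sum_le_card_support_mul_sum_sq {ι : Type*} [Fintype ι] (f : ι → ℝ) :
    (∑ i, f i) ^ 2 ≤ #{i | f i ≠ 0} * ∑ i, f i ^ 2 :=
  calc (∑ i, f i) ^ 2 = (∑ i with f i ≠ 0, f i) ^ 2 := by rw [sum_filter_ne_zero]
    _ ≤ #{i | f i ≠ 0} * ∑ i with f i ≠ 0, f i ^ 2 := sq_sum_le_card_mul_sum_sq
    _ ≤ #{i | f i ≠ 0} * ∑ i, f i ^ 2 := by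
      refine mul_le_mul_of_nonneg_left ?_ (Nat.cast_nonneg _)
      exact sum_le_sum_of_subset_of_nonneg (filter_subset (f · ≠ 0) univ)
        fun i _ _ => sq_nonneg (f i)

theorem sum_norm_sq_le_card_ne_zero {ι E : Type*} [Fintype ι] [SeminormedAddGroup E]
    [DecidableEq E] (f : ι → E) (hf : ∀ i, ‖f i‖ ≤ 1) : ∑ i, ‖f i‖ ^ 2 ≤ #{i | f i ≠ 0} := by
  rw [card_filter, Nat.cast_sum]
  refine sum_le_sum fun i _ => ?_
  split_ifs with h
  · rw [Nat.cast_one]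
    exact pow_le_one₀ (norm_nonneg _) (hf i)
  · simp [not_not.mp h]

namespace Matrix

theorem hadamard_single {α m n : Type*} [MulZeroClass α] [DecidableEq m] [DecidableEq n]
    (C : Matrix m n α) (i : m) (j : n) (a : α) :
    C ⊙ single i j a = single i j (C i j * a) := by
  ext k l
  by_cases h : i = k ∧ j = l
  · obtain ⟨rfl, rfl⟩ := h
    simp
  · simp [single_apply_of_ne _ _ _ _ _ h]

def schurMulLeft {R m n : Type*} [CommSemiring R] (C : Matrix m n R) :
    Matrix m n R →ₗ[R] Matrix m n R where
  toFun X := C ⊙ X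
  map_add' X Y := hadamard_add C X Y
  map_smul' c X := hadamard_smul C X c

section SchurMul

variable {K m n : Type*} [Field K] [Fintype m] [Fintype n] [DecidableEq m] [DecidableEq n]

theorem schurMulLeft_eq_toLin_diagonal (C : Matrix m n K) :
    schurMulLeft C = toLin (stdBasis K m n) (stdBasis K m n) (diagonal fun q => C q.1 q.2) := by
  refine (stdBasis K m n).ext fun ⟨i, j⟩ => ?_
  rw [toLin_self]
  simp [stdBasis_eq_single, schurMulLeft, diagonal_apply, hadamard_single, smul_single]

theorem finrank_range_schurMulLeft [DecidableEq K] (C : Matrix m n K) :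
    Module.finrank K (LinearMap.range (schurMulLeft C)) = #{q : m × n | C q.1 q.2 ≠ 0} := by
  rw [schurMulLeft_eq_toLin_diagonal, ← rank_eq_finrank_range_toLin, rank_diagonal,
    Fintype.card_subtype]

end SchurMul

variable {𝕜 n : Type*} [RCLike 𝕜]

theorem PosSemidef.norm_sq_apply_le {A : Matrix n n 𝕜} (hA : A.PosSemidef) (i j : n) :
    ((‖A i j‖ ^ 2 : ℝ) : 𝕜) ≤ A i i * A j j := by
  classical
  have h := (hA.submatrix ![i, j]).det_nonneg
  simp only [det_fin_two, submatrix_apply, cons_val_zero, cons_val_one] at h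
  rw [← hA.1.apply j i, RCLike.star_def, RCLike.mul_conj, sub_nonneg] at h
  exact_mod_cast h

theorem PosSemidef.norm_apply_le_one {A : Matrix n n 𝕜} (hA : A.PosSemidef)
    (hdiag : ∀ i, A i i = 1) (i j : n) : ‖A i j‖ ≤ 1 := by
  have h := hA.norm_sq_apply_le i j
  rw [hdiag, hdiag, one_mul, ← RCLike.ofReal_one, RCLike.ofReal_le_ofReal] at h
  exact (sq_le_one_iff₀ (norm_nonneg _)).mp h

variable [Fintype n]

theorem trace_mul_conjTranspose_eq_sum_norm_sq {m : Type*} [Fintype m] (A : Matrix m n 𝕜) :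
    (A * Aᴴ).trace = ∑ i, ∑ j, ((‖A i j‖ ^ 2 : ℝ) : 𝕜) := by
  simp [trace, mul_apply, RCLike.mul_conj]

namespace IsHermitian

variable [DecidableEq n] {A : Matrix n n 𝕜}

theorem trace_mul_self_eq_sum_eigenvalues_sq (hA : A.IsHermitian) :
    (A * A).trace = ∑ i, ((hA.eigenvalues i ^ 2 : ℝ) : 𝕜) := by
  conv_lhs => rw [hA.spectral_theorem, ← map_mul, Unitary.conjStarAlgAut_apply, trace_mul_cycle,
    Unitary.coe_star_mul_self, one_mul, diagonal_mul_diagonal, trace_diagonal]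
  simp [sq]

theorem sum_eigenvalues_sq (hA : A.IsHermitian) :
    ∑ i, hA.eigenvalues i ^ 2 = ∑ i, ∑ j, ‖A i j‖ ^ 2 := by
  have h := trace_mul_conjTranspose_eq_sum_norm_sq A
  rw [hA.eq, hA.trace_mul_self_eq_sum_eigenvalues_sq] at h
  exact_mod_cast h

theorem re_trace_eq_sum_eigenvalues (hA : A.IsHermitian) :
    RCLike.re A.trace = ∑ i, hA.eigenvalues i := by
  simp [hA.trace_eq_sum_eigenvalues]

theorem re_trace_sq_le_rank_mul_sum_norm_sq (hA : A.IsHermitian) :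
    RCLike.re A.trace ^ 2 ≤ A.rank * ∑ i, ∑ j, ‖A i j‖ ^ 2 := by
  rw [hA.re_trace_eq_sum_eigenvalues, ← hA.sum_eigenvalues_sq, hA.rank_eq_card_non_zero_eigs,
    Fintype.card_subtype]
  exact sq_sum_le_card_support_mul_sum_sq _

end IsHermitian

end Matrix

/-- For a Schur product channel `Φ(X) = C ∘ X` with `C` an `n × n` correlation matrix,
the rank of `Φ` as a linear map equals the number of nonzero entries of `C`, and
`rank(Φ) · rank(C ∘ conj C) ≥ n²`. -/
theorem schur_channel_rank {n : ℕ} (C : Matrix (Fin n) (Fin n) ℂ)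
    (hC : C.PosSemidef) (hdiag : ∀ i, C i i = 1)
    (Φ : Matrix (Fin n) (Fin n) ℂ →ₗ[ℂ] Matrix (Fin n) (Fin n) ℂ)
    (hΦ : ∀ X, Φ X = C ⊙ X) :
    Module.finrank ℂ (LinearMap.range Φ) =
      (Finset.univ.filter (fun q : Fin n × Fin n => C q.1 q.2 ≠ 0)).card ∧
    n ^ 2 ≤ Module.finrank ℂ (LinearMap.range Φ) * (C ⊙ C.map (starRingEnd ℂ)).rank := by
  have hrank : Module.finrank ℂ (LinearMap.range Φ) = #{q : Fin n × Fin n | C q.1 q.2 ≠ 0} := by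
    rw [show Φ = schurMulLeft C from LinearMap.ext hΦ, finrank_range_schurMulLeft]
  refine ⟨hrank, ?_⟩
  set A := C ⊙ C.map (starRingEnd ℂ)
  have hCconj : C.map (starRingEnd ℂ) = Cᵀ := by
    ext i j
    exact hC.1.apply j i
  have hA : A.PosSemidef := by
    rw [show A = C ⊙ Cᵀ from congrArg (C ⊙ ·) hCconj]
    exact hC.hadamard hC.transpose
  have hAdiag : ∀ i, A i i = 1 := fun i => by simp [A, hdiag]
  have hsupp : #{q : Fin n × Fin n | A q.1 q.2 ≠ 0} = #{q : Fin n × Fin n | C q.1 q.2 ≠ 0} := by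
    simp [A]
  have htrace : RCLike.re A.trace = n := by simp [trace, hAdiag]
  have hnorm := sum_norm_sq_le_card_ne_zero (fun q : Fin n × Fin n => A q.1 q.2)
    fun q => hA.norm_apply_le_one hAdiag q.1 q.2
  have hcs := hA.1.re_trace_sq_le_rank_mul_sum_norm_sq
  rw [htrace, ← Fintype.sum_prod_type'] at hcs
  rw [hsupp] at hnorm
  rw [hrank, mul_comm]
  exact_mod_cast hcs.trans (mul_le_mul_of_nonneg_left hnorm (Nat.cast_nonneg _))
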